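/- Let A be a commutative ring, F(x,y) = Σ_{k,l≥0} a_{k,l} x^k y^l a commutative formal group law over A, m its formal inverse, and n ≥ 0 an integer. Let R = A[Y]/(Y^{n+1}) and let ȳ denote the image of Y in R, so that ȳ is nilpotent and m(ȳ) = Σ_{k≥1} m_k ȳ^k is a well-defined nilpotent element of R. Then the element b = Σ_{k≥0} c_k X^k of R[[X]], where c_k = Σ_{l≥0} a_{k,l} · m(ȳ)^l (a finite sum since m(ȳ) is nilpotent), is a non-zero-divisor of R[[X]]. (In the paper this element is F(c̃, m(d)) in H^{**}(P^∞ × P^n) = (A[d]/d^{n+1})[[c̃]], and it is shown to be of the form (unit)·c̃ + (nilpotent), hence a non-zero-divisor.) -/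

import Mathlib

/-- The coefficient of `x^p y^q` in the `i`-th power of the two-variable formal power series
`F(x,y) = Σ_{k,l} a_{k,l} x^k y^l` with coefficient family `a`. -/
noncomputable def powCoeff2 {A : Type*} [CommRing A] (a : ℕ → ℕ → A) (i p q : ℕ) : A :=
  ∑ u ∈ Finset.Nat.antidiagonalTuple i p, ∑ v ∈ Finset.Nat.antidiagonalTuple i q,
    ∏ t : Fin i, a (u t) (v t)

/-- The coefficient of `t^s` in the `l`-th power of the one-variable formal power series
`m(t) = Σ_k m_k t^k` with coefficient family `m`. -/
noncomputable def powCoeff1 {A : Type*} [CommRing A] (m : ℕ → A) (l s : ℕ) : A :=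
  ∑ c ∈ Finset.Nat.antidiagonalTuple l s, ∏ i : Fin l, m (c i)

/-- A commutative formal group law over a commutative ring `A`, described by its family of
coefficients `a k l` (the coefficient of `x^k y^l` in `F(x,y)`).  The axioms `F(x,0) = x`,
`F(x,y) = F(y,x)` and `F(F(x,y),z) = F(x,F(y,z))` are expressed coefficientwise; note that
`x_axiom` gives `a 0 0 = 0` (zero constant term, so that all the compositions are well defined
and have coefficients given by finite sums) and `a 1 0 = 1`, and together with `comm`,
`a 0 1 = 1`. -/
structure FormalGroupLaw (A : Type*) [CommRing A] where
  /-- the coefficient of `x^k y^l` in `F(x,y)` -/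
  a : ℕ → ℕ → A
  /-- `F(x,0) = x` -/
  x_axiom : ∀ i : ℕ, a i 0 = if i = 1 then 1 else 0
  /-- `F(x,y) = F(y,x)` -/
  comm : ∀ i j : ℕ, a i j = a j i
  /-- `F(F(x,y),z) = F(x,F(y,z))`: the coefficient of `x^p y^q z^r` on both sides agree.
  On the left it is `Σ_i a_{i,r} · coeff_{p,q}(F^i)` (a finite sum as `a 0 0 = 0`),
  on the right it is `Σ_j a_{p,j} · coeff_{q,r}(F^j)`. -/
  assoc : ∀ p q r : ℕ,
    ∑ i ∈ Finset.range (p + q + 1), a i r * powCoeff2 a i p q =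
      ∑ j ∈ Finset.range (q + r + 1), a p j * powCoeff2 a j q r

/-- `m` (given by its coefficients, `m 0 = 0`) is the formal inverse of the formal group law
`F`: the identity `F(t, m(t)) = 0` holds, i.e. for every `w ≥ 0` the coefficient of `t^w` in
`F(t, m(t)) = Σ_{k,l} a_{k,l} t^k m(t)^l`, namely
`Σ_{k+s=w} Σ_{l} a_{k,l} · coeff_s(m(t)^l)` (a finite sum since `m 0 = 0` forces
`coeff_s(m(t)^l) = 0` for `l > s`), vanishes. -/
def FormalGroupLaw.IsFormalInverse {A : Type*} [CommRing A] (F : FormalGroupLaw A)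
    (m : ℕ → A) : Prop :=
  m 0 = 0 ∧ ∀ w : ℕ, ∑ ks ∈ Finset.HasAntidiagonal.antidiagonal w,
    ∑ l ∈ Finset.range (ks.2 + 1), F.a ks.1 l * powCoeff1 m l ks.2 = 0

/-!
Since `ȳ` is nilpotent, so is `m(ȳ)`, hence every `c_k` is `a_{k,0}` up to a nilpotent; in
particular `c_0` is nilpotent and `c_1 = 1 + (nilpotent)` is a unit. Thus
`b = X · u + c_0` with `u = Σ c_{k+1} X^k` a unit: a non-zero-divisor plus a nilpotent, which is
again a non-zero-divisor.
-/

open PowerSeries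
open scoped nonZeroDivisors

lemma add_mem_nonZeroDivisors_of_isNilpotent {R : Type*} [CommRing R] {r a : R}
    (hr : r ∈ R⁰) (ha : IsNilpotent a) : r + a ∈ R⁰ := by
  obtain ⟨N, hN⟩ := ha
  -- `r + a = r - (-a)` divides `r ^ N - (-a) ^ N = r ^ N`.
  obtain ⟨q, hq⟩ : r + a ∣ r ^ N := by
    have h := sub_dvd_pow_sub_pow r (-a) N
    rwa [sub_neg_eq_add, neg_pow, hN, mul_zero, sub_zero] at h
  have : (r + a) * q ∈ R⁰ := hq ▸ pow_mem hr N
  exact (mul_mem_nonZeroDivisors.mp this).1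

lemma PowerSeries.X_mem_nonZeroDivisors {S : Type*} [CommRing S] : (X : S⟦X⟧) ∈ S⟦X⟧⁰ :=
  mem_nonZeroDivisors_iff_right.mpr fun _ h ↦ mul_X_cancel (h.trans (zero_mul X).symm)

lemma PowerSeries.mem_nonZeroDivisors_of_isNilpotent_of_isUnit {S : Type*} [CommRing S]
    {f : S⟦X⟧} (h0 : IsNilpotent (constantCoeff f)) (h1 : IsUnit (coeff 1 f)) : f ∈ S⟦X⟧⁰ := by
  rw [eq_X_mul_shift_add_const f]
  have hshift : IsUnit (mk fun p ↦ coeff (p + 1) f) := by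
    rwa [isUnit_iff_constantCoeff, constantCoeff_mk]
  exact add_mem_nonZeroDivisors_of_isNilpotent
    (mul_mem_nonZeroDivisors.mpr ⟨X_mem_nonZeroDivisors, hshift.mem_nonZeroDivisors⟩)
    (h0.map C)

lemma isNilpotent_sum_range_mul_pow_sub {R : Type*} [CommRing R] {x : R} (hx : IsNilpotent x)
    (b : ℕ → R) (N : ℕ) : IsNilpotent (∑ l ∈ Finset.range (N + 1), b l * x ^ l - b 0) := by
  rw [Finset.sum_range_succ', pow_zero, mul_one, add_sub_cancel_right]
  exact isNilpotent_sum fun l _ ↦ (Commute.all _ _).isNilpotent_mul_left (hx.pow_succ l)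

lemma FormalGroupLaw.a_zero_zero {A : Type*} [CommRing A] (F : FormalGroupLaw A) :
    F.a 0 0 = 0 := by
  simp [F.x_axiom]

lemma FormalGroupLaw.a_one_zero {A : Type*} [CommRing A] (F : FormalGroupLaw A) :
    F.a 1 0 = 1 := by
  simp [F.x_axiom]

theorem stmt7_general (A : Type*) [CommRing A] (F : FormalGroupLaw A) (m : ℕ → A)
    (n : ℕ)
    (y : Polynomial A ⧸ Ideal.span {(Polynomial.X : Polynomial A) ^ (n + 1)})
    (hy : y = Ideal.Quotient.mk _ Polynomial.X)
    (my : Polynomial A ⧸ Ideal.span {(Polynomial.X : Polynomial A) ^ (n + 1)})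
    (hmy : my = ∑ k ∈ Finset.Icc 1 n,
      algebraMap A (Polynomial A ⧸ Ideal.span {(Polynomial.X : Polynomial A) ^ (n + 1)}) (m k)
        * y ^ k)
    (c : ℕ → Polynomial A ⧸ Ideal.span {(Polynomial.X : Polynomial A) ^ (n + 1)})
    (hc : ∀ k : ℕ, c k = ∑ l ∈ Finset.range (n + 1),
      algebraMap A (Polynomial A ⧸ Ideal.span {(Polynomial.X : Polynomial A) ^ (n + 1)}) (F.a k l)
        * my ^ l) :
    PowerSeries.mk c ∈
      nonZeroDivisors
        (PowerSeries (Polynomial A ⧸ Ideal.span {(Polynomial.X : Polynomial A) ^ (n + 1)})) := by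
  have hy_nil : IsNilpotent y := by
    refine ⟨n + 1, ?_⟩
    rw [hy, ← map_pow, Ideal.Quotient.eq_zero_iff_mem]
    exact Ideal.mem_span_singleton_self _
  have hmy_nil : IsNilpotent my := by
    rw [hmy]
    refine isNilpotent_sum fun k hk ↦ ?_
    obtain ⟨j, rfl⟩ := Nat.exists_eq_add_of_le' (Finset.mem_Icc.mp hk).1
    exact (Commute.all _ _).isNilpotent_mul_left (hy_nil.pow_succ j)
  have hc_nil (k : ℕ) : IsNilpotent (c k - algebraMap A _ (F.a k 0)) := by
    rw [hc k]
    exact isNilpotent_sum_range_mul_pow_sub hmy_nil _ n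
  refine mem_nonZeroDivisors_of_isNilpotent_of_isUnit ?_ ?_
  · simpa [F.a_zero_zero] using hc_nil 0
  · simpa [F.a_one_zero] using (hc_nil 1).isUnit_add_one

/-- let `F` be a commutative formal group law over `A` with coefficients `a_{k,l}`
and formal inverse `m`, and let `n ≥ 0`.  Let `R = A[Y]/(Y^{n+1})` and `ȳ` the image of `Y`
in `R`, so that `ȳ` is nilpotent and `m(ȳ) = Σ_{k ≥ 1} m_k ȳ^k` is a well-defined nilpotent
element of `R` (the sum is finite: only the terms with `k ≤ n` survive since `ȳ^{n+1} = 0`).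
Then the power series `b = Σ_{k ≥ 0} c_k X^k ∈ R[[X]]`, with
`c_k = Σ_{l ≥ 0} a_{k,l}·m(ȳ)^l` (a finite sum: `m(ȳ)^l = 0` for `l ≥ n+1` since `m(ȳ)` lies
in the ideal generated by `ȳ`), is a non-zero-divisor of `R[[X]]`. -/
theorem stmt7 (A : Type*) [CommRing A] (F : FormalGroupLaw A) (m : ℕ → A)
    (hm : F.IsFormalInverse m) (n : ℕ)
    (y : Polynomial A ⧸ Ideal.span {(Polynomial.X : Polynomial A) ^ (n + 1)})
    (hy : y = Ideal.Quotient.mk _ Polynomial.X)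
    (my : Polynomial A ⧸ Ideal.span {(Polynomial.X : Polynomial A) ^ (n + 1)})
    (hmy : my = ∑ k ∈ Finset.Icc 1 n,
      algebraMap A (Polynomial A ⧸ Ideal.span {(Polynomial.X : Polynomial A) ^ (n + 1)}) (m k)
        * y ^ k)
    (c : ℕ → Polynomial A ⧸ Ideal.span {(Polynomial.X : Polynomial A) ^ (n + 1)})
    (hc : ∀ k : ℕ, c k = ∑ l ∈ Finset.range (n + 1),
      algebraMap A (Polynomial A ⧸ Ideal.span {(Polynomial.X : Polynomial A) ^ (n + 1)}) (F.a k l)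
        * my ^ l) :
    PowerSeries.mk c ∈
      nonZeroDivisors
        (PowerSeries (Polynomial A ⧸ Ideal.span {(Polynomial.X : Polynomial A) ^ (n + 1)})) :=
  stmt7_general A F m n y hy my hmy c hc
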